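/- (i) If 0 < d ≤ e then φ_d has a unique fixed point in [0,1], and this fixed point is the unique global maximiser of Φ_d on [0,1]. (ii) If d > e then φ_d has exactly three fixed points 0 < α_* < α_0 < α^* < 1 in [0,1]; α_* and α^* are stable (φ_d' < 1 there) while α_0 is unstable; Φ_d(α_*) = Φ_d(α^*) > Φ_d(α) for every α ∈ [0,1] \ {α_*, α^*}; and α_0 satisfies 1 − α_0 = exp(−d(1 − α_0)). -/

import Mathlib

open Filter Topology MeasureTheory ProbabilityTheory

noncomputable section

/-- `φ_d(α) = 1 − exp(−d·exp(−d(1−α)))`. -/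
def phiFn (d α : ℝ) : ℝ := 1 - Real.exp (-d * Real.exp (-d * (1 - α)))

/-- `Φ_d(α) = exp(−d·exp(−d(1−α))) + (1 + d(1−α))·exp(−d(1−α)) − 1`. -/
def PhiFn (d α : ℝ) : ℝ :=
  Real.exp (-d * Real.exp (-d * (1 - α))) + (1 + d * (1 - α)) * Real.exp (-d * (1 - α)) - 1

/-- `α_*(d)`: the smallest fixed point of `φ_d` in `[0,1]`. -/
def alphaMin (d : ℝ) : ℝ := sInf {α : ℝ | α ∈ Set.Icc (0:ℝ) 1 ∧ phiFn d α = α}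

/-- `α^*(d)`: the largest fixed point of `φ_d` in `[0,1]`. -/
def alphaMax (d : ℝ) : ℝ := sSup {α : ℝ | α ∈ Set.Icc (0:ℝ) 1 ∧ phiFn d α = α}

/-- `α_0(d)`: for `d ≤ e` equal to `α_*(d)`; for `d > e` the unique fixed point of `φ_d`
in the open interval `(α_*(d), α^*(d))`. -/
def alphaMid (d : ℝ) : ℝ :=
  if d ≤ Real.exp 1 then alphaMin d
  else sInf {α : ℝ | α ∈ Set.Ioo (alphaMin d) (alphaMax d) ∧ phiFn d α = α}

open Real Set

/-!
Write `g(α) = 1 - exp (-d (1 - α))`, so that `φ_d = g ∘ g` and `Φ_d' = d² e^{-d(1-α)} (φ_d - α)`.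
The sign of `φ_d α - α` is that of `H(α) = log (1 - α) - log (1 - φ_d α) = d e^{-d(1-α)} + log (1 - α)`
(`logGap`), whose derivative has the sign of `d² x - e^{d x}`, `x = 1 - α`. For `d ≤ e` this is
negative except at `x = 1/d`, so `H` decreases from `H 0 > 0` to `-∞` and `Φ_d` peaks at its unique
zero. For `d > e` the convex function `e^{d x} - d² x` has two roots `r₁ < 1/d < r₂`, so `H`
decreases, increases and decreases again; at a root the critical value is
`2 (log t - sinh (log t))` with `t = d r`, positive at `r₁` and negative at `r₂`, which yields
exactly three zeros. The stable ones are exchanged by `g`, which preserves `Φ_d`; the middle one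
is the fixed point of `g`.
-/

theorem strictAntiOn_of_deriv_neg_of_ne {D : Set ℝ} (hD : Convex ℝ D) {f : ℝ → ℝ} {c : ℝ}
    (hf : ContinuousOn f D) (hf' : ∀ x ∈ interior D, x ≠ c → deriv f x < 0) :
    StrictAntiOn f D := by
  have piece : ∀ u ∈ D, ∀ v ∈ D, u < v → c ∉ Ioo u v → f v < f u := fun u hu v hv huv hc =>
    have hsub : Icc u v ⊆ D := hD.ordConnected.out hu hv
    strictAntiOn_of_deriv_neg (convex_Icc u v) (hf.mono hsub)
      (fun x hx => hf' x (interior_mono hsub hx) fun hxc => hc (hxc ▸ interior_Icc (a := u) ▸ hx))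
      (left_mem_Icc.2 huv.le) (right_mem_Icc.2 huv.le) huv
  intro u hu v hv huv
  by_cases hc : c ∈ Ioo u v
  · have hcD : c ∈ D := hD.ordConnected.out hu hv (Ioo_subset_Icc_self hc)
    exact (piece c hcD v hv hc.2 fun h => lt_irrefl c h.1).trans
      (piece u hu c hcD hc.1 fun h => lt_irrefl c h.2)
  · exact piece u hu v hv huv hc

theorem StrictAntiOn.exists_zero {f : ℝ → ℝ} {I : Set ℝ} (hI : I.OrdConnected)
    (hf : StrictAntiOn f I) (hfc : ContinuousOn f I) {a b : ℝ} (ha : a ∈ I) (hb : b ∈ I)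
    (hfa : 0 < f a) (hfb : f b < 0) :
    ∃ c ∈ Ioo a b, f c = 0 ∧ ∀ z ∈ I, (z < c → 0 < f z) ∧ (c < z → f z < 0) := by
  have hab : a < b := (hf.lt_iff_gt hb ha).1 (hfb.trans hfa)
  obtain ⟨c, hc, hfc0⟩ :=
    intermediate_value_Ioo' hab.le (hfc.mono (hI.out ha hb)) ⟨hfb, hfa⟩
  have hcI : c ∈ I := hI.out ha hb (Ioo_subset_Icc_self hc)
  exact ⟨c, hc, hfc0, fun z hz => ⟨fun h => hfc0 ▸ hf hz hcI h, fun h => hfc0 ▸ hf hcI hz h⟩⟩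

theorem StrictMonoOn.exists_zero {f : ℝ → ℝ} {I : Set ℝ} (hI : I.OrdConnected)
    (hf : StrictMonoOn f I) (hfc : ContinuousOn f I) {a b : ℝ} (ha : a ∈ I) (hb : b ∈ I)
    (hfa : f a < 0) (hfb : 0 < f b) :
    ∃ c ∈ Ioo a b, f c = 0 ∧ ∀ z ∈ I, (z < c → f z < 0) ∧ (c < z → 0 < f z) := by
  obtain ⟨c, hc, hfc0, hsign⟩ := hf.neg.exists_zero hI hfc.neg ha hb (by simpa) (by simpa)
  exact ⟨c, hc, neg_eq_zero.1 hfc0, fun z hz => by simpa using hsign z hz⟩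

theorem sq_lt_exp {x : ℝ} (hx : 0 ≤ x) : x ^ 2 < exp x := by
  have half : x < exp (x / 2) := by
    rcases hx.eq_or_lt with rfl | hx
    · simp
    · calc x < exp 1 * (x / 2) := by nlinarith [exp_one_gt_d9]
        _ ≤ exp (x / 2) := exp_one_mul_le_exp
  calc x ^ 2 < exp (x / 2) ^ 2 := by gcongr
    _ = exp x := by rw [← exp_nat_mul]; ring_nf

theorem mul_exp_one_lt_exp {y : ℝ} (hy : y ≠ 1) : exp 1 * y < exp y := by
  have := add_one_lt_exp (sub_ne_zero.2 hy)
  calc exp 1 * y < exp 1 * exp (y - 1) := by gcongr; linarith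
    _ = exp y := by rw [← exp_add]; ring_nf

def logGap (d α : ℝ) : ℝ := d * exp (-d * (1 - α)) + log (1 - α)

section Calculus

variable {d α : ℝ}

theorem hasDerivAt_exp_neg_mul_one_sub (d α : ℝ) :
    HasDerivAt (fun a => exp (-d * (1 - a))) (d * exp (-d * (1 - α))) α := by
  have h : HasDerivAt (fun a : ℝ => -d * (1 - a)) d α := by
    simpa using ((hasDerivAt_id α).const_sub 1).const_mul (-d)
  simpa [mul_comm] using h.exp

theorem hasDerivAt_phiFn (d α : ℝ) :
    HasDerivAt (phiFn d)
      (d ^ 2 * exp (-d * (1 - α)) * exp (-d * exp (-d * (1 - α)))) α := by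
  refine (((hasDerivAt_exp_neg_mul_one_sub d α).const_mul (-d)).exp.const_sub 1).congr_deriv ?_
  ring

theorem hasDerivAt_PhiFn (d α : ℝ) :
    HasDerivAt (PhiFn d) (d ^ 2 * exp (-d * (1 - α)) * (phiFn d α - α)) α := by
  have hE := hasDerivAt_exp_neg_mul_one_sub d α
  have hl : HasDerivAt (fun a : ℝ => 1 + d * (1 - a)) (-d) α := by
    simpa using (((hasDerivAt_id α).const_sub 1).const_mul d).const_add 1
  refine ((((hE.const_mul (-d)).exp).add (hl.mul hE)).sub_const 1).congr_deriv ?_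
  simp only [phiFn]
  ring

theorem hasDerivAt_logGap (d : ℝ) (hα : α < 1) :
    HasDerivAt (logGap d)
      ((d ^ 2 * (1 - α) - exp (d * (1 - α))) / ((1 - α) * exp (d * (1 - α)))) α := by
  have hx : 1 - α ≠ 0 := by linarith
  have hl : HasDerivAt (fun a : ℝ => log (1 - a)) (-1 / (1 - α)) α := by
    simpa using ((hasDerivAt_id α).const_sub 1).log hx
  refine (((hasDerivAt_exp_neg_mul_one_sub d α).const_mul d).add hl).congr_deriv ?_
  rw [neg_mul, exp_neg]
  field_simp
  ring

theorem continuousOn_logGap (d : ℝ) : ContinuousOn (logGap d) (Iio 1) :=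
  fun _ hα => (hasDerivAt_logGap d hα).continuousAt.continuousWithinAt

theorem deriv_phiFn_of_fixed (h : phiFn d α = α) :
    deriv (phiFn d) α = d ^ 2 * (1 - α) / exp (d * (1 - α)) := by
  have hx : exp (-d * exp (-d * (1 - α))) = 1 - α := by unfold phiFn at h; linarith
  rw [(hasDerivAt_phiFn d α).deriv, hx, neg_mul, exp_neg]
  field_simp

end Calculus

section Signs

variable {d α : ℝ}

theorem one_sub_phiFn (d α : ℝ) : 1 - phiFn d α = exp (-d * exp (-d * (1 - α))) := by
  unfold phiFn; ring

theorem logGap_eq (d α : ℝ) : logGap d α = log (1 - α) - log (1 - phiFn d α) := by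
  rw [one_sub_phiFn, log_exp, logGap]; ring

theorem lt_one_of_phiFn_eq (hα : α ≤ 1) (h : phiFn d α = α) : α < 1 :=
  hα.lt_of_ne fun h1 => by
    have := exp_pos (-d * exp (-d * (1 - 1)))
    rw [h1, phiFn] at h
    linarith

theorem phiFn_eq_iff (hα : α < 1) : phiFn d α = α ↔ logGap d α = 0 := by
  have h1 : 0 < 1 - α := by linarith
  have h2 : 0 < 1 - phiFn d α := by rw [one_sub_phiFn]; exact exp_pos _
  rw [logGap_eq d α, sub_eq_zero, log_injOn_pos.eq_iff h1 h2]
  constructor <;> intro h <;> linarith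

theorem lt_phiFn_iff (hα : α < 1) : α < phiFn d α ↔ 0 < logGap d α := by
  have h2 : 0 < 1 - phiFn d α := by rw [one_sub_phiFn]; exact exp_pos _
  rw [logGap_eq d α, sub_pos, log_lt_log_iff h2 (by linarith)]
  constructor <;> intro h <;> linarith

theorem phiFn_lt_iff (hα : α < 1) : phiFn d α < α ↔ logGap d α < 0 := by
  have h2 : 0 < 1 - phiFn d α := by rw [one_sub_phiFn]; exact exp_pos _
  rw [logGap_eq d α, sub_neg, log_lt_log_iff (by linarith) h2]
  constructor <;> intro h <;> linarith

end Signs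

section Monotonicity

variable {d : ℝ}

theorem PhiFn_strictMonoOn (hd : d ≠ 0) {a b : ℝ} (hb : b ≤ 1)
    (h : ∀ z ∈ Ioo a b, 0 < logGap d z) : StrictMonoOn (PhiFn d) (Icc a b) :=
  strictMonoOn_of_deriv_pos (convex_Icc a b) (by unfold PhiFn; fun_prop) fun z hz => by
    rw [interior_Icc] at hz
    have := sub_pos.2 ((lt_phiFn_iff (hz.2.trans_le hb)).2 (h z hz))
    rw [(hasDerivAt_PhiFn d z).deriv]
    positivity

theorem PhiFn_strictAntiOn (hd : d ≠ 0) {a b : ℝ} (hb : b ≤ 1)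
    (h : ∀ z ∈ Ioo a b, logGap d z < 0) : StrictAntiOn (PhiFn d) (Icc a b) :=
  strictAntiOn_of_deriv_neg (convex_Icc a b) (by unfold PhiFn; fun_prop) fun z hz => by
    rw [interior_Icc] at hz
    have := sub_neg.2 ((phiFn_lt_iff (hz.2.trans_le hb)).2 (h z hz))
    rw [(hasDerivAt_PhiFn d z).deriv]
    exact mul_neg_of_pos_of_neg (by positivity) this

theorem PhiFn_lt_of_peak (hd : d ≠ 0) {a c b β : ℝ} (hac : a ≤ c) (hcb : c ≤ b) (hb : b ≤ 1)
    (hpos : ∀ z ∈ Ioo a c, 0 < logGap d z) (hneg : ∀ z ∈ Ioo c b, logGap d z < 0)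
    (hβ : β ∈ Icc a b) (hne : β ≠ c) : PhiFn d β < PhiFn d c := by
  rcases hne.lt_or_gt with h | h
  · exact PhiFn_strictMonoOn hd (hcb.trans hb) hpos ⟨hβ.1, h.le⟩ ⟨hac, le_rfl⟩ h
  · exact PhiFn_strictAntiOn hd hb hneg ⟨le_rfl, hcb⟩ ⟨h.le, hβ.2⟩ h

theorem logGap_strictAntiOn {D : Set ℝ} (hD : Convex ℝ D) (hD1 : D ⊆ Iio 1) {c : ℝ}
    (h : ∀ z ∈ interior D, z ≠ c → d ^ 2 * (1 - z) < exp (d * (1 - z))) :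
    StrictAntiOn (logGap d) D :=
  strictAntiOn_of_deriv_neg_of_ne hD ((continuousOn_logGap d).mono hD1) fun z hz hzc => by
    have hz1 : z < 1 := hD1 (interior_subset hz)
    rw [(hasDerivAt_logGap d hz1).deriv]
    exact div_neg_of_neg_of_pos (sub_neg.2 (h z hz hzc)) (mul_pos (by linarith) (exp_pos _))

theorem logGap_strictMonoOn {D : Set ℝ} (hD : Convex ℝ D) (hD1 : D ⊆ Iio 1)
    (h : ∀ z ∈ interior D, exp (d * (1 - z)) < d ^ 2 * (1 - z)) :
    StrictMonoOn (logGap d) D :=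
  strictMonoOn_of_deriv_pos hD ((continuousOn_logGap d).mono hD1) fun z hz => by
    have hz1 : z < 1 := hD1 (interior_subset hz)
    rw [(hasDerivAt_logGap d hz1).deriv]
    exact div_pos (sub_pos.2 (h z hz)) (mul_pos (by linarith) (exp_pos _))

end Monotonicity

section Values

variable {d x : ℝ}

theorem logGap_zero_pos (hd : 0 < d) : 0 < logGap d 0 := by
  simp only [logGap, sub_zero, mul_one, log_one, add_zero]
  positivity

theorem logGap_one_sub_mul_exp_neg (hd : 0 < d) (hx0 : 0 < x) (hx1 : x < 1) :
    logGap d (1 - x * exp (-d)) < 0 := by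
  have hexp : exp (-d * (x * exp (-d))) ≤ 1 :=
    exp_le_one_iff.2 (by have := mul_pos hx0 (exp_pos (-d)); nlinarith)
  have hlog : log x < 0 := log_neg hx0 hx1
  rw [logGap, sub_sub_cancel, log_mul hx0.ne' (exp_pos _).ne', log_exp]
  nlinarith

/-- `exp (d x) = d² x` says that `1 - x` is a critical point of `logGap d`; the critical value
has the sign of `1 - d x`. -/
theorem logGap_one_sub_of_exp_mul_eq (hd : 0 < d) (hx : 0 < x)
    (h : exp (d * x) = d ^ 2 * x) :
    logGap d (1 - x) = 2 * (log (d * x) - sinh (log (d * x))) := by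
  have hdx : 0 < d * x := mul_pos hd hx
  have hlogd : log d = d * x - log (d * x) := by
    have := congrArg log h
    rw [log_exp, sq, mul_assoc, log_mul hd.ne' hdx.ne'] at this
    linarith
  rw [sinh_log hdx, logGap, sub_sub_cancel, neg_mul, exp_neg, h,
    show log x = log (d * x) - log d by rw [log_mul hd.ne' hx.ne']; ring, hlogd]
  field_simp
  ring

theorem logGap_one_sub_pos_of_exp_mul_eq (hd : 0 < d) (hx : 0 < x)
    (h : exp (d * x) = d ^ 2 * x) (hdx : d * x < 1) : 0 < logGap d (1 - x) := by
  rw [logGap_one_sub_of_exp_mul_eq hd hx h]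
  have := sinh_lt_self_iff.2 (log_neg (mul_pos hd hx) hdx)
  linarith

theorem logGap_one_sub_neg_of_exp_mul_eq (hd : 0 < d) (hx : 0 < x)
    (h : exp (d * x) = d ^ 2 * x) (hdx : 1 < d * x) : logGap d (1 - x) < 0 := by
  rw [logGap_one_sub_of_exp_mul_eq hd hx h]
  have := self_lt_sinh_iff.2 (log_pos hdx)
  linarith

end Values

section Contraction

variable {d x : ℝ}

theorem sq_mul_lt_exp_mul_of_le_exp (hd : 0 < d) (hde : d ≤ exp 1) (hx : 0 < x)
    (hdx : d * x ≠ 1) : d ^ 2 * x < exp (d * x) :=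
  calc d ^ 2 * x = d * (d * x) := by ring
    _ ≤ exp 1 * (d * x) := by gcongr
    _ < exp (d * x) := mul_exp_one_lt_exp hdx

theorem hasDerivAt_exp_mul_sub_sq_mul (d x : ℝ) :
    HasDerivAt (fun y => exp (d * y) - d ^ 2 * y) (d * exp (d * x) - d ^ 2) x := by
  have h : HasDerivAt (fun y : ℝ => d * y) d x := by simpa using (hasDerivAt_id x).const_mul d
  refine (h.exp.sub (by simpa using (hasDerivAt_id x).const_mul (d ^ 2))).congr_deriv ?_
  ring

theorem exp_mul_sub_sq_mul_strictAntiOn (hd : 0 < d) :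
    StrictAntiOn (fun y => exp (d * y) - d ^ 2 * y) (Iic (log d / d)) :=
  strictAntiOn_of_deriv_neg (convex_Iic _) (by fun_prop) fun z hz => by
    rw [interior_Iic, mem_Iio, lt_div_iff₀ hd] at hz
    have := (lt_log_iff_exp_lt hd).1 (show d * z < log d by linarith)
    rw [(hasDerivAt_exp_mul_sub_sq_mul d z).deriv]
    nlinarith

theorem exp_mul_sub_sq_mul_strictMonoOn (hd : 0 < d) :
    StrictMonoOn (fun y => exp (d * y) - d ^ 2 * y) (Ici (log d / d)) :=
  strictMonoOn_of_deriv_pos (convex_Ici _) (by fun_prop) fun z hz => by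
    rw [interior_Ici, mem_Ioi, div_lt_iff₀ hd] at hz
    have := (log_lt_iff_lt_exp hd).1 (show log d < d * z by linarith)
    rw [(hasDerivAt_exp_mul_sub_sq_mul d z).deriv]
    nlinarith

theorem exists_roots_exp_mul_eq_sq_mul (hd : exp 1 < d) :
    ∃ r₁ r₂, 0 < r₁ ∧ d * r₁ < 1 ∧ 1 < d * r₂ ∧ r₂ < 1 ∧
      exp (d * r₁) = d ^ 2 * r₁ ∧ exp (d * r₂) = d ^ 2 * r₂ ∧
      (∀ x < r₁, d ^ 2 * x < exp (d * x)) ∧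
      (∀ x ∈ Ioo r₁ r₂, exp (d * x) < d ^ 2 * x) ∧
      (∀ x > r₂, d ^ 2 * x < exp (d * x)) := by
  have hd0 : 0 < d := (exp_pos 1).trans hd
  have hlog : 1 < log d := (lt_log_iff_exp_lt hd0).2 hd
  set m := log d / d
  have hdm : d * m = log d := mul_div_cancel₀ _ hd0.ne'
  have hinv : 1 / d < m := div_lt_div_of_pos_right hlog hd0
  have hm1 : m < 1 := (div_lt_one hd0).2 ((log_le_sub_one_of_pos hd0).trans_lt (by linarith))
  set K := fun y => exp (d * y) - d ^ 2 * y
  have hKinv : K (1 / d) < 0 := by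
    simp only [K, mul_one_div_cancel hd0.ne']
    field_simp; linarith
  have hKm : K m < 0 := by
    simp only [K, hdm, exp_log hd0]
    nlinarith
  have hK1 : 0 < K 1 := by simpa [K] using sq_lt_exp hd0.le
  obtain ⟨r₁, hr₁, hK₁, s₁⟩ := (exp_mul_sub_sq_mul_strictAntiOn hd0).exists_zero ordConnected_Iic
    (by fun_prop) (a := 0) (b := 1 / d) (by simp; positivity) hinv.le (by simp) hKinv
  obtain ⟨r₂, hr₂, hK₂, s₂⟩ := (exp_mul_sub_sq_mul_strictMonoOn hd0).exists_zero ordConnected_Ici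
    (by fun_prop) (a := m) (b := 1) self_mem_Ici hm1.le hKm hK1
  refine ⟨r₁, r₂, hr₁.1, (lt_div_iff₀' hd0).1 (by simpa using hr₁.2), ?_, hr₂.2,
    by simpa [K, sub_eq_zero] using hK₁, by simpa [K, sub_eq_zero] using hK₂, ?_, ?_, ?_⟩
  · have := (div_lt_iff₀' hd0).1 (hinv.trans hr₂.1); simpa using this
  · intro x hx
    simpa [K] using (s₁ x (by simp; linarith [hr₁.2])).1 hx
  · intro x hx
    rcases le_total x m with hxm | hxm
    · simpa [K] using (s₁ x hxm).2 hx.1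
    · simpa [K] using (s₂ x hxm).1 hx.2
  · intro x hx
    simpa [K] using (s₂ x (by simp; linarith [hr₂.1])).2 hx

end Contraction

section TwoCycles

variable {d x α β : ℝ}

theorem deriv_phiFn_lt_one (h : phiFn d α = α) (hK : d ^ 2 * (1 - α) < exp (d * (1 - α))) :
    deriv (phiFn d) α < 1 := by
  rw [deriv_phiFn_of_fixed h, div_lt_one (exp_pos _)]
  exact hK

theorem one_lt_deriv_phiFn (h : phiFn d α = α) (hK : exp (d * (1 - α)) < d ^ 2 * (1 - α)) :
    1 < deriv (phiFn d) α := by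
  rw [deriv_phiFn_of_fixed h, one_lt_div (exp_pos _)]
  exact hK

theorem phiFn_eq_of_two_cycle (hαβ : exp (-d * (1 - α)) = 1 - β)
    (hβα : exp (-d * (1 - β)) = 1 - α) : phiFn d α = α := by
  rw [phiFn, hαβ, hβα]; ring

theorem PhiFn_eq_of_two_cycle (hαβ : exp (-d * (1 - α)) = 1 - β)
    (hβα : exp (-d * (1 - β)) = 1 - α) : PhiFn d α = PhiFn d β := by
  simp only [PhiFn, hαβ, hβα]; ring

theorem exists_exp_neg_mul_eq (hd : 0 < d) : ∃ x ∈ Ioo (0 : ℝ) 1, exp (-d * x) = x := by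
  obtain ⟨x, hx, hx0⟩ : (0 : ℝ) ∈ (fun x => exp (-d * x) - x) '' Ioo 0 1 :=
    intermediate_value_Ioo' zero_le_one (by fun_prop) ⟨by simpa using hd, by simp⟩
  exact ⟨x, hx, sub_eq_zero.1 hx0⟩

/-- A fixed point `x = exp (-d x)` has `d = (d x) exp (d x)`, so `d x > 1` once `d > e`. -/
theorem exp_mul_lt_sq_mul_of_exp_neg_mul_eq (hd : exp 1 < d) (hx : 0 < x)
    (h : exp (-d * x) = x) : exp (d * x) < d ^ 2 * x := by
  have hinv : exp (d * x) * x = 1 := by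
    nth_rw 2 [← h]
    rw [← exp_add]
    simp
  have hdx : 1 < d * x := by
    by_contra! hle
    have : d = d * x * exp (d * x) := by linear_combination (-d) * hinv
    have := mul_le_mul hle (exp_le_exp.2 hle) (exp_pos _).le zero_le_one
    linarith
  nlinarith

end TwoCycles

section FixedPoints

variable {d α : ℝ}

theorem exists_unique_phiFn_eq_of_le_exp (hd : 0 < d) (hde : d ≤ exp 1) :
    ∃ α₀ ∈ Icc (0 : ℝ) 1, phiFn d α₀ = α₀ ∧
      (∀ α ∈ Icc (0 : ℝ) 1, phiFn d α = α → α = α₀) ∧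
      ∀ β ∈ Icc (0 : ℝ) 1, β ≠ α₀ → PhiFn d β < PhiFn d α₀ := by
  have hanti : StrictAntiOn (logGap d) (Ico 0 1) :=
    logGap_strictAntiOn (convex_Ico 0 1) (fun z hz => hz.2) (c := 1 - 1 / d) fun z hz hzc => by
      rw [interior_Ico] at hz
      refine sq_mul_lt_exp_mul_of_le_exp hd hde (by linarith [hz.2]) fun h => hzc ?_
      field_simp
      linarith
  have hb : 1 - 2⁻¹ * exp (-d) ∈ Ico (0 : ℝ) 1 := by
    have := exp_lt_one_iff.2 (neg_lt_zero.2 hd)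
    constructor <;> nlinarith [exp_pos (-d)]
  obtain ⟨α₀, hα₀, h₀, sign⟩ := hanti.exists_zero ordConnected_Ico
    ((continuousOn_logGap d).mono fun z hz => hz.2) (left_mem_Ico.2 one_pos) hb
    (logGap_zero_pos hd) (logGap_one_sub_mul_exp_neg hd (by norm_num) (by norm_num))
  have hα₀1 : α₀ < 1 := hα₀.2.trans hb.2
  refine ⟨α₀, ⟨hα₀.1.le, hα₀1.le⟩, (phiFn_eq_iff hα₀1).2 h₀, fun α hα hfix => ?_,
    fun β hβ hne => ?_⟩
  · have hα1 := lt_one_of_phiFn_eq hα.2 hfix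
    have hzero := (phiFn_eq_iff hα1).1 hfix
    by_contra hne
    rcases Ne.lt_or_gt hne with h | h
    · linarith [(sign α ⟨hα.1, hα1⟩).1 h]
    · linarith [(sign α ⟨hα.1, hα1⟩).2 h]
  · exact PhiFn_lt_of_peak hd.ne' hα₀.1.le hα₀1.le le_rfl
      (fun z hz => (sign z ⟨hz.1.le, hz.2.trans hα₀1⟩).1 hz.2)
      (fun z hz => (sign z ⟨hα₀.1.le.trans hz.1.le, hz.2⟩).2 hz.1) hβ hne

end FixedPoints

structure LogGapThreeZeros (d α₁ α₂ α₃ : ℝ) : Prop where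
  pos : 0 < α₁
  lt₁₂ : α₁ < α₂
  lt₂₃ : α₂ < α₃
  lt_one : α₃ < 1
  zero₁ : logGap d α₁ = 0
  zero₂ : logGap d α₂ = 0
  zero₃ : logGap d α₃ = 0
  pos₀₁ : ∀ z ∈ Ico 0 α₁, 0 < logGap d z
  neg₁₂ : ∀ z ∈ Ioo α₁ α₂, logGap d z < 0
  pos₂₃ : ∀ z ∈ Ioo α₂ α₃, 0 < logGap d z
  neg₃₁ : ∀ z ∈ Ioo α₃ 1, logGap d z < 0
  /-- At a fixed point `α`, `exp (d (1 - α)) - d² (1 - α)` has the sign of `1 - φ_d' α`. -/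
  contracting₁ : d ^ 2 * (1 - α₁) < exp (d * (1 - α₁))
  expanding₂ : exp (d * (1 - α₂)) < d ^ 2 * (1 - α₂)
  contracting₃ : d ^ 2 * (1 - α₃) < exp (d * (1 - α₃))

section ThreeFixedPoints

variable {d α₁ α₂ α₃ : ℝ}

theorem exists_logGapThreeZeros (hd : exp 1 < d) : ∃ α₁ α₂ α₃, LogGapThreeZeros d α₁ α₂ α₃ := by
  have hd0 : 0 < d := (exp_pos 1).trans hd
  obtain ⟨r₁, r₂, hr₁, hdr₁, hdr₂, hr₂, hK₁, hK₂, contr₁, exp₁₂, contr₂⟩ :=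
    exists_roots_exp_mul_eq_sq_mul hd
  have hr₁₂ : r₁ < r₂ := lt_of_mul_lt_mul_left (hdr₁.trans hdr₂) hd0.le
  have hA : StrictAntiOn (logGap d) (Icc 0 (1 - r₂)) :=
    logGap_strictAntiOn (convex_Icc _ _) (fun z hz => by simp at hz ⊢; linarith) (c := 0)
      fun z hz _ => contr₂ _ (by rw [interior_Icc] at hz; linarith [hz.2])
  have hB : StrictMonoOn (logGap d) (Icc (1 - r₂) (1 - r₁)) :=
    logGap_strictMonoOn (convex_Icc _ _) (fun z hz => by simp at hz ⊢; linarith)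
      fun z hz => exp₁₂ _ (by rw [interior_Icc] at hz; constructor <;> linarith [hz.1, hz.2])
  have hC : StrictAntiOn (logGap d) (Ico (1 - r₁) 1) :=
    logGap_strictAntiOn (convex_Ico _ _) (fun z hz => hz.2) (c := 0)
      fun z hz _ => contr₁ _ (by rw [interior_Ico] at hz; linarith [hz.1])
  have hH₁ := logGap_one_sub_pos_of_exp_mul_eq hd0 hr₁ hK₁ hdr₁
  have hH₂ := logGap_one_sub_neg_of_exp_mul_eq hd0 (hr₁.trans hr₁₂) hK₂ hdr₂
  have hb : 1 - r₁ * exp (-d) ∈ Ico (1 - r₁) 1 := by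
    have := exp_lt_one_iff.2 (neg_lt_zero.2 hd0)
    constructor <;> nlinarith [exp_pos (-d)]
  obtain ⟨α₁, hα₁, h₁, s₁⟩ := hA.exists_zero ordConnected_Icc
    ((continuousOn_logGap d).mono fun z hz => by simp at hz ⊢; linarith)
    (left_mem_Icc.2 (by linarith)) (right_mem_Icc.2 (by linarith)) (logGap_zero_pos hd0) hH₂
  obtain ⟨α₂, hα₂, h₂, s₂⟩ := hB.exists_zero ordConnected_Icc
    ((continuousOn_logGap d).mono fun z hz => by simp at hz ⊢; linarith)
    (left_mem_Icc.2 (by linarith)) (right_mem_Icc.2 (by linarith)) hH₂ hH₁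
  obtain ⟨α₃, hα₃, h₃, s₃⟩ := hC.exists_zero ordConnected_Ico
    ((continuousOn_logGap d).mono fun z hz => hz.2) (left_mem_Ico.2 (by linarith)) hb hH₁
    (logGap_one_sub_mul_exp_neg hd0 hr₁ (by linarith))
  refine ⟨α₁, α₂, α₃, hα₁.1, hα₁.2.trans hα₂.1, hα₂.2.trans hα₃.1, hα₃.2.trans hb.2,
    h₁, h₂, h₃, fun z hz => (s₁ z ⟨hz.1, by linarith [hz.2, hα₁.2]⟩).1 hz.2, fun z hz => ?_,
    fun z hz => ?_, fun z hz => (s₃ z ⟨by linarith [hz.1, hα₃.1], hz.2⟩).2 hz.1,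
    contr₂ _ (by linarith [hα₁.2]), exp₁₂ _ ⟨by linarith [hα₂.2], by linarith [hα₂.1]⟩,
    contr₁ _ (by linarith [hα₃.1])⟩
  · rcases le_total z (1 - r₂) with hz₂ | hz₂
    · exact (s₁ z ⟨by linarith [hz.1, hα₁.1], hz₂⟩).2 hz.1
    · exact (s₂ z ⟨hz₂, by linarith [hz.2, hα₂.2]⟩).1 hz.2
  · rcases le_total z (1 - r₁) with hz₁ | hz₁
    · exact (s₂ z ⟨by linarith [hz.1, hα₂.1], hz₁⟩).2 hz.1
    · exact (s₃ z ⟨hz₁, by linarith [hz.2, hα₃.2, hb.2]⟩).1 hz.2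

namespace LogGapThreeZeros

theorem fixed (h : LogGapThreeZeros d α₁ α₂ α₃) :
    phiFn d α₁ = α₁ ∧ phiFn d α₂ = α₂ ∧ phiFn d α₃ = α₃ :=
  ⟨(phiFn_eq_iff (by linarith [h.lt₁₂, h.lt₂₃, h.lt_one])).2 h.zero₁,
    (phiFn_eq_iff (by linarith [h.lt₂₃, h.lt_one])).2 h.zero₂, (phiFn_eq_iff h.lt_one).2 h.zero₃⟩

theorem fixedPoints_eq (h : LogGapThreeZeros d α₁ α₂ α₃) :
    {α : ℝ | α ∈ Icc (0 : ℝ) 1 ∧ phiFn d α = α} = {α₁, α₂, α₃} := by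
  have := h.pos; have := h.lt₁₂; have := h.lt₂₃; have := h.lt_one
  ext α
  simp only [mem_ofPred_eq, mem_insert_iff, mem_singleton_iff]
  constructor
  · rintro ⟨hα, hfix⟩
    have hα1 := lt_one_of_phiFn_eq hα.2 hfix
    have hzero := (phiFn_eq_iff hα1).1 hfix
    by_contra! hne
    obtain ⟨h₁, h₂, h₃⟩ := hne
    rcases h₁.lt_or_gt with h₁ | h₁
    · linarith [h.pos₀₁ α ⟨hα.1, h₁⟩]
    rcases h₂.lt_or_gt with h₂ | h₂
    · linarith [h.neg₁₂ α ⟨h₁, h₂⟩]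
    rcases h₃.lt_or_gt with h₃ | h₃
    · linarith [h.pos₂₃ α ⟨h₂, h₃⟩]
    · linarith [h.neg₃₁ α ⟨h₃, hα1⟩]
  · rintro (rfl | rfl | rfl)
    · exact ⟨⟨by linarith, by linarith⟩, h.fixed.1⟩
    · exact ⟨⟨by linarith, by linarith⟩, h.fixed.2.1⟩
    · exact ⟨⟨by linarith, by linarith⟩, h.fixed.2.2⟩

theorem exp_neg_mul_eq (hd : exp 1 < d) (h : LogGapThreeZeros d α₁ α₂ α₃) :
    exp (-d * (1 - α₂)) = 1 - α₂ := by
  obtain ⟨x, hx, hψ⟩ := exists_exp_neg_mul_eq ((exp_pos 1).trans hd)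
  have hexp := exp_mul_lt_sq_mul_of_exp_neg_mul_eq hd hx.1 hψ
  have hfix : phiFn d (1 - x) = 1 - x :=
    phiFn_eq_of_two_cycle (β := 1 - x) (by simpa using hψ) (by simpa using hψ)
  have hmem : 1 - x ∈ {α : ℝ | α ∈ Icc (0 : ℝ) 1 ∧ phiFn d α = α} :=
    ⟨⟨by linarith [hx.2], by linarith [hx.1]⟩, hfix⟩
  rw [h.fixedPoints_eq] at hmem
  rcases hmem with h₁ | h₂ | h₃
  · have := h.contracting₁; rw [← h₁, sub_sub_cancel] at this; linarith
  · rw [← h₂, sub_sub_cancel]; exact hψ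
  · have := h.contracting₃; rw [← h₃, sub_sub_cancel] at this; linarith

theorem PhiFn_eq (hd : exp 1 < d) (h : LogGapThreeZeros d α₁ α₂ α₃) :
    PhiFn d α₁ = PhiFn d α₃ := by
  set β := 1 - exp (-d * (1 - α₁))
  have hαβ : exp (-d * (1 - α₁)) = 1 - β := (sub_sub_cancel 1 _).symm
  have hβα : exp (-d * (1 - β)) = 1 - α₁ := by
    rw [← hαβ, ← one_sub_phiFn, h.fixed.1]
  have hmem : β ∈ {α : ℝ | α ∈ Icc (0 : ℝ) 1 ∧ phiFn d α = α} := by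
    have := exp_le_one_iff.2 (by nlinarith [h.pos, h.lt₁₂, h.lt₂₃, h.lt_one, (exp_pos 1).trans hd] :
      -d * (1 - α₁) ≤ 0)
    exact ⟨⟨by linarith, by linarith [exp_pos (-d * (1 - α₁))]⟩, phiFn_eq_of_two_cycle hβα hαβ⟩
  rw [h.fixedPoints_eq] at hmem
  rcases hmem with h₁ | h₂ | h₃
  · rw [h₁] at hαβ
    have := exp_mul_lt_sq_mul_of_exp_neg_mul_eq hd (by linarith [h.lt₁₂, h.lt₂₃, h.lt_one]) hαβ
    linarith [h.contracting₁]
  · rw [h₂, h.exp_neg_mul_eq hd] at hβα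
    linarith [h.lt₁₂]
  · rw [PhiFn_eq_of_two_cycle hαβ hβα, h₃]

theorem PhiFn_lt (hd : exp 1 < d) (h : LogGapThreeZeros d α₁ α₂ α₃) :
    ∀ α ∈ Icc (0 : ℝ) 1, α ≠ α₁ → α ≠ α₃ → PhiFn d α < PhiFn d α₁ := by
  have hd0 : d ≠ 0 := ((exp_pos 1).trans hd).ne'
  intro α hα h₁ h₃
  rcases le_total α α₂ with hα₂ | hα₂
  · exact PhiFn_lt_of_peak hd0 h.pos.le h.lt₁₂.le (h.lt₂₃.trans h.lt_one).le
      (fun z hz => h.pos₀₁ z ⟨hz.1.le, hz.2⟩) h.neg₁₂ ⟨hα.1, hα₂⟩ h₁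
  · rw [h.PhiFn_eq hd]
    exact PhiFn_lt_of_peak hd0 h.lt₂₃.le h.lt_one.le le_rfl h.pos₂₃ h.neg₃₁ ⟨hα₂, hα.2⟩ h₃

end LogGapThreeZeros

theorem alphaMin_alphaMid_alphaMax_eq (hd : exp 1 < d)
    (hF : {α : ℝ | α ∈ Icc (0 : ℝ) 1 ∧ phiFn d α = α} = {α₁, α₂, α₃})
    (h₁₂ : α₁ < α₂) (h₂₃ : α₂ < α₃) :
    alphaMin d = α₁ ∧ alphaMid d = α₂ ∧ alphaMax d = α₃ := by
  have hmin : alphaMin d = α₁ := by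
    rw [alphaMin, hF]
    exact IsLeast.csInf_eq ⟨by simp, by rintro y (rfl | rfl | rfl) <;> linarith⟩
  have hmax : alphaMax d = α₃ := by
    rw [alphaMax, hF]
    exact IsGreatest.csSup_eq ⟨by simp, by rintro y (rfl | rfl | rfl) <;> linarith⟩
  have hmem (α : ℝ) : α ∈ Icc (0 : ℝ) 1 ∧ phiFn d α = α ↔ α = α₁ ∨ α = α₂ ∨ α = α₃ := by
    simpa using Set.ext_iff.1 hF α
  have hmid : {α : ℝ | α ∈ Ioo α₁ α₃ ∧ phiFn d α = α} = {α₂} := by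
    have h₁ := ((hmem α₁).2 (Or.inl rfl)).1
    have h₃ := ((hmem α₃).2 (Or.inr (Or.inr rfl))).1
    ext α
    constructor
    · rintro ⟨hα, hfix⟩
      rcases (hmem α).1 ⟨⟨h₁.1.trans hα.1.le, hα.2.le.trans h₃.2⟩, hfix⟩ with rfl | rfl | rfl
      · exact absurd hα.1 (lt_irrefl _)
      · rfl
      · exact absurd hα.2 (lt_irrefl _)
    · rintro rfl
      exact ⟨⟨h₁₂, h₂₃⟩, ((hmem α).2 (Or.inr (Or.inl rfl))).2⟩
  rw [alphaMid, if_neg hd.not_ge, hmin, hmax, hmid, csInf_singleton]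
  exact ⟨rfl, rfl, rfl⟩

end ThreeFixedPoints

/-- (i) for `0 < d ≤ e`, `φ_d` has a unique fixed point in `[0,1]`, which is
the unique global maximiser of `Φ_d`; (ii) for `d > e`, `φ_d` has exactly the three fixed
points `0 < α_* < α_0 < α^* < 1`, with `α_*, α^*` stable and `α_0` unstable,
`Φ_d(α_*) = Φ_d(α^*) > Φ_d(α)` for all other `α ∈ [0,1]`, and `1 − α_0 = exp(−d(1−α_0))`. -/
theorem statement6 :
    (∀ d : ℝ, 0 < d → d ≤ Real.exp 1 →
      (∃! α : ℝ, α ∈ Set.Icc (0:ℝ) 1 ∧ phiFn d α = α) ∧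
      (∀ α ∈ Set.Icc (0:ℝ) 1, phiFn d α = α →
        ∀ β ∈ Set.Icc (0:ℝ) 1, β ≠ α → PhiFn d β < PhiFn d α)) ∧
    (∀ d : ℝ, Real.exp 1 < d →
      0 < alphaMin d ∧ alphaMin d < alphaMid d ∧ alphaMid d < alphaMax d ∧ alphaMax d < 1 ∧
      {α : ℝ | α ∈ Set.Icc (0:ℝ) 1 ∧ phiFn d α = α} =
        {alphaMin d, alphaMid d, alphaMax d} ∧
      deriv (phiFn d) (alphaMin d) < 1 ∧
      deriv (phiFn d) (alphaMax d) < 1 ∧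
      1 ≤ deriv (phiFn d) (alphaMid d) ∧
      PhiFn d (alphaMin d) = PhiFn d (alphaMax d) ∧
      (∀ α ∈ Set.Icc (0:ℝ) 1, α ≠ alphaMin d → α ≠ alphaMax d →
        PhiFn d α < PhiFn d (alphaMin d)) ∧
      1 - alphaMid d = Real.exp (-d * (1 - alphaMid d))) := by
  refine ⟨fun d hd hde => ?_, fun d hd => ?_⟩
  · obtain ⟨α₀, hα₀, hfix, huniq, hmax⟩ := exists_unique_phiFn_eq_of_le_exp hd hde
    refine ⟨⟨α₀, ⟨hα₀, hfix⟩, fun α hα => huniq α hα.1 hα.2⟩, fun α hα hαfix => ?_⟩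
    rw [huniq α hα hαfix]
    exact hmax
  · obtain ⟨α₁, α₂, α₃, h⟩ := exists_logGapThreeZeros hd
    obtain ⟨hmin, hmid, hmax⟩ :=
      alphaMin_alphaMid_alphaMax_eq hd h.fixedPoints_eq h.lt₁₂ h.lt₂₃
    rw [hmin, hmid, hmax]
    exact ⟨h.pos, h.lt₁₂, h.lt₂₃, h.lt_one, h.fixedPoints_eq,
      deriv_phiFn_lt_one h.fixed.1 h.contracting₁, deriv_phiFn_lt_one h.fixed.2.2 h.contracting₃,
      (one_lt_deriv_phiFn h.fixed.2.1 h.expanding₂).le, h.PhiFn_eq hd, h.PhiFn_lt hd,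
      (h.exp_neg_mul_eq hd).symm⟩
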